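/- arXiv:math-ph/0703031 — 6 statements merged into one kernel-verified Lean document; each statement's English description precedes it below -/
import Mathlib

section
/- Let V be a complex vector space and ω : V × V → ℂ a skew-Hermitian sesquilinear form. Let k be a nonzero real number and let f_1,…,f_n, g_1,…,g_n ∈ V satisfy the Jost relations with parameter k. Let S be an n×n complex matrix and define ψ_i = g_i + Σ_j S_{ij} f_j for i = 1,…,n. If ω(ψ_i, ψ_j) = 0 for all i, j (i.e., the span of the ψ_i is isotropic), then S is unitary: Σ_m conj(S_{im}) S_{jm} = δ_{ij} for all i, j. -/
open Complex

/-- Unitarity of the scattering matrix: if the scattering-wave solutions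
`ψ i = g i + ∑ j, S i j • f j` built from Jost solutions span an isotropic
subspace for the skew-Hermitian sesquilinear form `ω`, then `S` is unitary. -/
theorem scattering_matrix_unitary
    {V : Type*} [AddCommGroup V] [Module ℂ V]
    (ω : V →ₗ⋆[ℂ] V →ₗ[ℂ] ℂ)
    (hskew : ∀ x y : V, (starRingEnd ℂ) (ω x y) = - ω y x)
    (n : ℕ) (k : ℝ) (hk : k ≠ 0)
    (f g : Fin n → V)
    (hff : ∀ i j, ω (f i) (f j) = 2 * Complex.I * (k : ℂ) * (if i = j then 1 else 0))
    (hgg : ∀ i j, ω (g i) (g j) = -(2 * Complex.I * (k : ℂ) * (if i = j then 1 else 0)))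
    (hfg : ∀ i j, ω (f i) (g j) = 0)
    (hgf : ∀ i j, ω (g i) (f j) = 0)
    (S : Matrix (Fin n) (Fin n) ℂ)
    (ψ : Fin n → V) (hψ : ∀ i, ψ i = g i + ∑ j, S i j • f j)
    (hiso : ∀ i j, ω (ψ i) (ψ j) = 0) :
    ∀ i j, (∑ m, (starRingEnd ℂ) (S i m) * S j m) = if i = j then 1 else 0 := by
  intro i j
  have h := hiso i j
  rw [hψ i, hψ j] at h
  have hexp : ω (g i + ∑ m, S i m • f m) (g j + ∑ l, S j l • f l)
      = -(2 * Complex.I * (k : ℂ) * (if i = j then 1 else 0))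
        + 2 * Complex.I * (k : ℂ) * ∑ m, (starRingEnd ℂ) (S i m) * S j m := by
    simp only [map_add, LinearMap.add_apply, map_sum, LinearMap.sum_apply,
      map_smul, LinearMap.smul_apply, LinearMap.map_smulₛₗ, hgg, hfg, hgf, hff]
    simp only [smul_eq_mul, mul_zero, Finset.sum_const_zero, add_zero, zero_add]
    congr 1
    rw [Finset.mul_sum]
    refine Finset.sum_congr rfl fun m _ => ?_
    rw [Finset.sum_eq_single m]
    · simp; ring
    · intro b _ hb
      simp [hb]
    · simp
  rw [hexp] at h
  have h2 : (2 : ℂ) * Complex.I * (k : ℂ) ≠ 0 := by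
    simp [Complex.I_ne_zero, hk]
  have h3 : (2 : ℂ) * Complex.I * (k : ℂ) *
      ((∑ m, (starRingEnd ℂ) (S i m) * S j m) - (if i = j then 1 else 0)) = 0 := by
    linear_combination h
  rcases mul_eq_zero.mp h3 with h4 | h4
  · exact absurd h4 h2
  · linear_combination h4
end

section
/- Let V be a complex vector space and ω : V × V → ℂ a skew-Hermitian sesquilinear form. Let k be a nonzero real number and let f_1,…,f_n, g_1,…,g_n ∈ V satisfy the Jost relations with parameter k. Let S be an n×n complex matrix, and define ψ_i = g_i + Σ_j S_{ij} f_j and φ_i = f_i + Σ_l conj(S_{il}) g_l for i = 1,…,n. If ω(φ_i, ψ_j) = 0 for all i, j, then S is symmetric: S_{ij} = S_{ji} for all i, j. -/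
open Complex

/-- Symmetry of the scattering matrix: if the scattering waves
`ψ i = g i + ∑ j, S i j • f j` and their conjugates
`φ i = f i + ∑ l, conj (S i l) • g l` pair to zero under the skew-Hermitian
sesquilinear form `ω`, then `S` is symmetric. -/
theorem scattering_matrix_symmetric
    {V : Type*} [AddCommGroup V] [Module ℂ V]
    (ω : V →ₗ⋆[ℂ] V →ₗ[ℂ] ℂ)
    (hskew : ∀ x y : V, (starRingEnd ℂ) (ω x y) = - ω y x)
    (n : ℕ) (k : ℝ) (hk : k ≠ 0)
    (f g : Fin n → V)
    (hff : ∀ i j, ω (f i) (f j) = 2 * Complex.I * (k : ℂ) * (if i = j then 1 else 0))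
    (hgg : ∀ i j, ω (g i) (g j) = -(2 * Complex.I * (k : ℂ) * (if i = j then 1 else 0)))
    (hfg : ∀ i j, ω (f i) (g j) = 0)
    (hgf : ∀ i j, ω (g i) (f j) = 0)
    (S : Matrix (Fin n) (Fin n) ℂ)
    (ψ φ : Fin n → V)
    (hψ : ∀ i, ψ i = g i + ∑ j, S i j • f j)
    (hφ : ∀ i, φ i = f i + ∑ l, (starRingEnd ℂ) (S i l) • g l)
    (hpair : ∀ i j, ω (φ i) (ψ j) = 0) :
    ∀ i j, S i j = S j i := by
  intro i j
  have h := hpair i j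
  rw [hψ, hφ] at h
  simp only [map_add, map_sum, map_smulₛₗ, LinearMap.add_apply, LinearMap.sum_apply,
    LinearMap.smul_apply, map_smul, hff, hgg, hfg, hgf, smul_eq_mul,
    RingHom.id_apply, starRingEnd_self_apply, mul_ite, mul_one, mul_zero,
    Finset.sum_ite_eq, Finset.sum_ite_eq', Finset.mem_univ, if_true,
    zero_add, add_zero, Finset.sum_const_zero] at h
  have h2 : (2 * Complex.I * (k:ℂ)) ≠ 0 := by
    simp [Complex.ext_iff, hk, Complex.I_ne_zero]
  simp only [mul_neg, neg_mul, mul_ite, mul_zero, Finset.sum_neg_distrib,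
    Finset.sum_ite_eq, Finset.sum_ite_eq', Finset.mem_univ, if_true] at h
  have h3 : (S j i - S i j) * (2 * Complex.I * (k:ℂ)) = 0 := by linear_combination h
  rcases mul_eq_zero.mp h3 with h4 | h4
  · linear_combination -h4
  · exact absurd h4 h2
end

section
/- Let V be a complex vector space and ω : V × V → ℂ a skew-Hermitian sesquilinear form. Let f_1,…,f_n, g_1,…,g_n ∈ V satisfy the Jost relations with parameter 1 (so ω(f_i,f_j) = 2i·δ_{ij}, ω(g_i,g_j) = −2i·δ_{ij}, ω(f_i,g_j) = 0 = ω(g_i,f_j)). Let S be an n×n unitary matrix, and define ψ_i = (1/2)( Σ_j S_{ij} f_j + g_i ) and χ_i = (1/(2i))( Σ_j S_{ij} f_j − g_i ) for i = 1,…,n. Then {ψ_1,…,ψ_n, χ_1,…,χ_n} is a canonical basis configuration: ω(ψ_i, ψ_j) = 0 = ω(χ_i, χ_j), ω(ψ_i, χ_j) = δ_{ij}, and ω(χ_i, ψ_j) = −δ_{ij} for all i, j. Moreover, for each i one has ψ_i = Σ_j [ (1/2)(S + I)_{ij} p_j + (1/2)(i(S − I))_{ij} q_j ] where p_j = (f_j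 + g_j)/2 and q_j = (f_j − g_j)/(2i). -/
/-!
Since `S` is unitary, the vectors `∑ j, S i j • f j` satisfy the same relations as the `f i`
and stay `ω`-orthogonal to the `g i`, so together with the `g i` they again satisfy the Jost
relations. Any pair of families satisfying the Jost relations yields a canonical basis via
`p = (f + g)/2`, `q = (f - g)/(2i)`; applied to the transformed pair this gives `ψ` and `χ`.
The formula for `ψ` in terms of the original `p` and `q` is pure linear algebra, from
`f = p + i q` and `g = p - i q`.
-/

open Complex

section
variable {ι V : Type*} [AddCommGroup V] [Module ℂ V] (ω : V →ₗ⋆[ℂ] V →ₗ[ℂ] ℂ)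

structure IsJostPair [DecidableEq ι] (f g : ι → V) : Prop where
  ff : ∀ i j, ω (f i) (f j) = 2 * I * (if i = j then 1 else 0)
  gg : ∀ i j, ω (g i) (g j) = -(2 * I * (if i = j then 1 else 0))
  fg : ∀ i j, ω (f i) (g j) = 0
  gf : ∀ i j, ω (g i) (f j) = 0

structure IsCanonicalBasis [DecidableEq ι] (p q : ι → V) : Prop where
  pp : ∀ i j, ω (p i) (p j) = 0
  qq : ∀ i j, ω (q i) (q j) = 0
  pq : ∀ i j, ω (p i) (q j) = if i = j then 1 else 0
  qp : ∀ i j, ω (q i) (p j) = -(if i = j then 1 else 0)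

variable [Fintype ι] [DecidableEq ι]

theorem sesq_sum_smul_of_orthogonal {v : ι → V} {c : ℂ}
    (hv : ∀ k l, ω (v k) (v l) = c * if k = l then 1 else 0) (a b : ι → ℂ) :
    ω (∑ k, a k • v k) (∑ l, b l • v l) = c * ∑ k, star (a k) * b k := by
  simp only [map_sum, map_smulₛₗ, LinearMap.sum_apply, LinearMap.smul_apply, smul_eq_mul,
    RingHom.id_apply, starRingEnd_apply, hv, mul_ite, mul_one, mul_zero, Finset.sum_ite_eq',
    Finset.mem_univ, if_true, Finset.mul_sum]
  exact Finset.sum_congr rfl fun k _ => by ring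

theorem sum_star_mul_eq_of_mem_unitaryGroup {S : Matrix ι ι ℂ}
    (hS : S ∈ Matrix.unitaryGroup ι ℂ) (i j : ι) :
    ∑ k, star (S i k) * S j k = if i = j then 1 else 0 := by
  have := congrFun (congrFun (Matrix.mem_unitaryGroup_iff.mp hS) j) i
  simp only [Matrix.mul_apply, Matrix.star_apply, Matrix.one_apply] at this
  simp_rw [mul_comm (star _), this, eq_comm]

theorem half_smul_sum_add_eq_sum_canonical (S : Matrix ι ι ℂ) (f g : ι → V) (i : ι) :
    (1 / 2 : ℂ) • (∑ j, S i j • f j + g i) =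
      ∑ j, ((1 / 2 * (S + 1) i j) • ((1 / 2 : ℂ) • (f j + g j)) +
        (1 / 2 * (I * (S - 1) i j)) • ((1 / (2 * I)) • (f j - g j))) := by
  have hterm : ∀ j, (1 / 2 * (S + 1) i j) • ((1 / 2 : ℂ) • (f j + g j)) +
      (1 / 2 * (I * (S - 1) i j)) • ((1 / (2 * I)) • (f j - g j)) =
        (1 / 2 : ℂ) • (S i j • f j + (if i = j then 1 else 0 : ℂ) • g j) := by
    intro j
    simp only [Matrix.add_apply, Matrix.sub_apply, Matrix.one_apply]
    match_scalars <;> field_simp <;> ring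
  simp only [hterm, ← Finset.smul_sum, Finset.sum_add_distrib, ite_smul, one_smul, zero_smul,
    Finset.sum_ite_eq, Finset.mem_univ, if_true]

variable {ω}

theorem IsJostPair.unitary_transform {f g : ι → V} (h : IsJostPair ω f g)
    {S : Matrix ι ι ℂ} (hS : S ∈ Matrix.unitaryGroup ι ℂ) :
    IsJostPair ω (fun i => ∑ j, S i j • f j) g where
  ff i j := by
    rw [sesq_sum_smul_of_orthogonal ω h.ff, sum_star_mul_eq_of_mem_unitaryGroup hS]
  gg := h.gg
  fg i j := by simp [h.fg]
  gf i j := by simp [h.gf]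

omit [Fintype ι] in
theorem IsJostPair.isCanonicalBasis {f g : ι → V} (h : IsJostPair ω f g) :
    IsCanonicalBasis ω (fun i => (1 / 2 : ℂ) • (f i + g i))
      (fun i => (1 / (2 * I)) • (f i - g i)) where
  pp i j := by simp [h.ff, h.gg, h.fg, h.gf]
  qq i j := by simp [h.ff, h.gg, h.fg, h.gf]
  pq i j := by
    split_ifs <;> simp [h.ff, h.gg, h.fg, h.gf, map_ofNat, *]
    ring_nf
    simp
  qp i j := by
    split_ifs <;> simp [h.ff, h.gg, h.fg, h.gf, map_ofNat, *]
    ring_nf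
    simp

end

theorem scattering_matrix_parametrises_lagrange_plane_general
    {V : Type*} [AddCommGroup V] [Module ℂ V]
    (ω : V →ₗ⋆[ℂ] V →ₗ[ℂ] ℂ)
    (n : ℕ) (f g : Fin n → V)
    (hff : ∀ i j, ω (f i) (f j) = 2 * Complex.I * (if i = j then 1 else 0))
    (hgg : ∀ i j, ω (g i) (g j) = -(2 * Complex.I * (if i = j then 1 else 0)))
    (hfg : ∀ i j, ω (f i) (g j) = 0)
    (hgf : ∀ i j, ω (g i) (f j) = 0)
    (S : Matrix (Fin n) (Fin n) ℂ) (hS : S ∈ Matrix.unitaryGroup (Fin n) ℂ)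
    (ψ χ : Fin n → V)
    (hψ : ∀ i, ψ i = ((1 : ℂ)/2) • ((∑ j, S i j • f j) + g i))
    (hχ : ∀ i, χ i = (1/(2 * Complex.I)) • ((∑ j, S i j • f j) - g i)) :
    (∀ i j, ω (ψ i) (ψ j) = 0) ∧
    (∀ i j, ω (χ i) (χ j) = 0) ∧
    (∀ i j, ω (ψ i) (χ j) = if i = j then 1 else 0) ∧
    (∀ i j, ω (χ i) (ψ j) = -(if i = j then 1 else 0)) ∧
    (∀ i, ψ i =
      ∑ j, ((((1 : ℂ)/2) * ((S + 1) i j)) • (((1 : ℂ)/2) • (f j + g j)) +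
            (((1 : ℂ)/2) * (Complex.I * ((S - 1) i j))) •
              ((1/(2 * Complex.I)) • (f j - g j)))) := by
  obtain rfl : ψ = fun i => (1 / 2 : ℂ) • (∑ j, S i j • f j + g i) := funext hψ
  obtain rfl : χ = fun i => (1 / (2 * I)) • (∑ j, S i j • f j - g i) := funext hχ
  have hjost : IsJostPair ω f g := ⟨hff, hgg, hfg, hgf⟩
  obtain ⟨hψψ, hχχ, hψχ, hχψ⟩ := (hjost.unitary_transform hS).isCanonicalBasis
  exact ⟨hψψ, hχχ, hψχ, hχψ, half_smul_sum_add_eq_sum_canonical S f g⟩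

/-- The scattering matrix as parameter of the Lagrange plane: for a unitary
`S`, the vectors `ψ i = (1/2)(∑ j, S i j • f j + g i)` and
`χ i = (1/(2i))(∑ j, S i j • f j - g i)` built from Jost solutions (parameter
`k = 1`) form a canonical basis configuration, and the `ψ i` are obtained from
the canonical basis `p j = (f j + g j)/2`, `q j = (f j - g j)/(2i)` by the
hermitian symplectic transformation with blocks `(S+I)/2` and `i(S-I)/2`. -/
theorem scattering_matrix_parametrises_lagrange_plane
    {V : Type*} [AddCommGroup V] [Module ℂ V]
    (ω : V →ₗ⋆[ℂ] V →ₗ[ℂ] ℂ)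
    (hskew : ∀ x y : V, (starRingEnd ℂ) (ω x y) = - ω y x)
    (n : ℕ) (f g : Fin n → V)
    (hff : ∀ i j, ω (f i) (f j) = 2 * Complex.I * (if i = j then 1 else 0))
    (hgg : ∀ i j, ω (g i) (g j) = -(2 * Complex.I * (if i = j then 1 else 0)))
    (hfg : ∀ i j, ω (f i) (g j) = 0)
    (hgf : ∀ i j, ω (g i) (f j) = 0)
    (S : Matrix (Fin n) (Fin n) ℂ) (hS : S ∈ Matrix.unitaryGroup (Fin n) ℂ)
    (ψ χ : Fin n → V)
    (hψ : ∀ i, ψ i = ((1 : ℂ)/2) • ((∑ j, S i j • f j) + g i))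
    (hχ : ∀ i, χ i = (1/(2 * Complex.I)) • ((∑ j, S i j • f j) - g i)) :
    (∀ i j, ω (ψ i) (ψ j) = 0) ∧
    (∀ i j, ω (χ i) (χ j) = 0) ∧
    (∀ i j, ω (ψ i) (χ j) = if i = j then 1 else 0) ∧
    (∀ i j, ω (χ i) (ψ j) = -(if i = j then 1 else 0)) ∧
    (∀ i, ψ i =
      ∑ j, ((((1 : ℂ)/2) * ((S + 1) i j)) • (((1 : ℂ)/2) • (f j + g j)) +
            (((1 : ℂ)/2) * (Complex.I * ((S - 1) i j))) •
              ((1/(2 * Complex.I)) • (f j - g j)))) :=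
  scattering_matrix_parametrises_lagrange_plane_general ω n f g hff hgg hfg hgf S hS ψ χ hψ hχ
end

section
/- Let V be a complex vector space and ω : V × V → ℂ a skew-Hermitian sesquilinear form. Let p ≥ 1 and let f'_1,…,f'_p, g'_1,…,g'_p, f''_1,…,f''_p, g''_1,…,g''_p ∈ V satisfy: ω(f'_i, f'_j) = 2i·δ_{ij} = ω(f''_i, f''_j), ω(g'_i, g'_j) = −2i·δ_{ij} = ω(g''_i, g''_j), and all other pairings among these 4p vectors vanish (ω(f'_i, g'_j) = ω(g'_i, f'_j) = ω(f''_i, g''_j) = ω(g''_i, f''_j) = 0 and every pairing of a primed vector with a double-primed vector is 0). Let ζ_1,…,ζ_p ∈ ℂ with |ζ_i| = 1 for all i. Then the 2p vectors u_i = ζ_i f'_i + g''_i and v_i = g'_i + ζ_i f''_i (i = 1,…,p) are linearly independent and their span N is an isotropic subspace of dimension 2p. -/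
open Complex

/-!
Both `ζ i • f' i + g'' i` and `ζ j • f'' j + g' j` pair a "`+2i`" vector with a "`-2i`"
vector, and `|ζ i| = 1` makes the two contributions to the diagonal pairings cancel, while all
cross pairings vanish by hypothesis; so the generators are pairwise `ω`-orthogonal, and then so
is their span. Pairing with `f' j` and `f'' j` isolates the coefficient of the `j`-th generator
of each kind (times `2i ζ j ≠ 0`), which gives linear independence and hence dimension `2p`.
-/

theorem linearIndependent_of_biorthogonal {R M ι : Type*} [CommRing R] [NoZeroDivisors R]
    [AddCommGroup M] [Module R M] {s : ι → M} (φ : ι → M →ₗ[R] R)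
    (hdiag : ∀ i, φ i (s i) ≠ 0) (hoff : ∀ i j, i ≠ j → φ i (s j) = 0) :
    LinearIndependent R s := by
  rw [linearIndependent_iff']
  intro t c hc i hi
  have hsum : ∑ j ∈ t, c j * φ i (s j) = c i * φ i (s i) :=
    Finset.sum_eq_single_of_mem i hi fun j _ hji => by rw [hoff i j hji.symm, mul_zero]
  have hzero : c i * φ i (s i) = 0 := by
    simpa only [map_sum, map_smul, smul_eq_mul, hsum, map_zero] using congrArg (φ i) hc
  exact (mul_eq_zero.mp hzero).resolve_right (hdiag i)

theorem LinearMap.apply_eq_zero_of_mem_span {R₁ R₂ R M N P : Type*} [CommSemiring R₁]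
    [CommSemiring R₂] [CommSemiring R] [AddCommMonoid M] [AddCommMonoid N] [AddCommMonoid P]
    [Module R₁ M] [Module R₂ N] [Module R P] {σ₁ : R₁ →+* R} {σ₂ : R₂ →+* R}
    (B : M →ₛₗ[σ₁] N →ₛₗ[σ₂] P) {s : Set M} {t : Set N} (h : ∀ x ∈ s, ∀ y ∈ t, B x y = 0) :
    ∀ x ∈ Submodule.span R₁ s, ∀ y ∈ Submodule.span R₂ t, B x y = 0 := by
  have hright : ∀ x ∈ s, Submodule.span R₂ t ≤ LinearMap.ker (B x) := fun x hx =>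
    Submodule.span_le.mpr fun y hy => h x hx y hy
  have hleft : Submodule.span R₁ s ≤ LinearMap.ker (B.compl₂ (Submodule.span R₂ t).subtype) :=
    Submodule.span_le.mpr fun x hx => LinearMap.ext fun y => hright x hx y.2
  exact fun x hx y hy => LinearMap.congr_fun (hleft hx) ⟨y, hy⟩

theorem LinearMap.apply_smul_add_smul_add {R M P : Type*} [CommSemiring R] [AddCommMonoid M]
    [AddCommMonoid P] [Module R M] [Module R P] {σ : R →+* R} (B : M →ₛₗ[σ] M →ₗ[R] P)
    (α β : R) (a b c d : M) :
    B (α • a + b) (β • c + d) = σ α • β • B a c + σ α • B a d + β • B b c + B b d := by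
  simp only [map_add, map_smulₛₗ, LinearMap.add_apply, LinearMap.smul_apply, RingHom.id_apply]
  module

theorem apply_smul_add_eq_zero_of_norm_eq_one {V ι : Type*} [AddCommGroup V] [Module ℂ V]
    [DecidableEq ι] (ω : V →ₗ⋆[ℂ] V →ₗ[ℂ] ℂ) (c : ℂ) {a b : ι → V}
    (ha : ∀ i j, ω (a i) (a j) = c * (if i = j then 1 else 0))
    (hb : ∀ i j, ω (b i) (b j) = -(c * (if i = j then 1 else 0)))
    (hab : ∀ i j, ω (a i) (b j) = 0) (hba : ∀ i j, ω (b i) (a j) = 0)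
    {ζ : ι → ℂ} (hζ : ∀ i, ‖ζ i‖ = 1) (i j : ι) :
    ω (ζ i • a i + b i) (ζ j • a j + b j) = 0 := by
  rw [LinearMap.apply_smul_add_smul_add, ha, hb, hab, hba]
  obtain rfl | hij := eq_or_ne i j
  · have hunit : starRingEnd ℂ (ζ i) * ζ i = 1 := by rw [conj_mul', hζ i]; norm_num
    simp only [if_true, smul_eq_mul, mul_zero, add_zero]
    linear_combination c * hunit
  · simp [hij]

theorem matching_subspace_isotropic_general
    {V : Type*} [AddCommGroup V] [Module ℂ V]
    (ω : V →ₗ⋆[ℂ] V →ₗ[ℂ] ℂ)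
    (p : ℕ)
    (f' g' f'' g'' : Fin p → V)
    (hf'f' : ∀ i j, ω (f' i) (f' j) = 2 * Complex.I * (if i = j then 1 else 0))
    (hf''f'' : ∀ i j, ω (f'' i) (f'' j) = 2 * Complex.I * (if i = j then 1 else 0))
    (hg'g' : ∀ i j, ω (g' i) (g' j) = -(2 * Complex.I * (if i = j then 1 else 0)))
    (hg''g'' : ∀ i j, ω (g'' i) (g'' j) = -(2 * Complex.I * (if i = j then 1 else 0)))
    (hf'g' : ∀ i j, ω (f' i) (g' j) = 0) (hg'f' : ∀ i j, ω (g' i) (f' j) = 0)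
    (hf''g'' : ∀ i j, ω (f'' i) (g'' j) = 0) (hg''f'' : ∀ i j, ω (g'' i) (f'' j) = 0)
    (hf'f'' : ∀ i j, ω (f' i) (f'' j) = 0) (hf''f' : ∀ i j, ω (f'' i) (f' j) = 0)
    (hf'g'' : ∀ i j, ω (f' i) (g'' j) = 0) (hg''f' : ∀ i j, ω (g'' i) (f' j) = 0)
    (hg'f'' : ∀ i j, ω (g' i) (f'' j) = 0) (hf''g' : ∀ i j, ω (f'' i) (g' j) = 0)
    (hg'g'' : ∀ i j, ω (g' i) (g'' j) = 0) (hg''g' : ∀ i j, ω (g'' i) (g' j) = 0)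
    (ζ : Fin p → ℂ) (hζ : ∀ i, ‖ζ i‖ = 1)
    (u v : Fin p → V)
    (hu : ∀ i, u i = ζ i • f' i + g'' i)
    (hv : ∀ i, v i = g' i + ζ i • f'' i) :
    LinearIndependent ℂ (Sum.elim u v) ∧
    (∀ x ∈ Submodule.span ℂ (Set.range (Sum.elim u v)),
      ∀ y ∈ Submodule.span ℂ (Set.range (Sum.elim u v)), ω x y = 0) ∧
    Module.finrank ℂ (Submodule.span ℂ (Set.range (Sum.elim u v))) = 2 * p := by
  have hv' : ∀ i, v i = ζ i • f'' i + g' i := fun i => (hv i).trans (add_comm _ _)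
  have hζ0 : ∀ i, ζ i ≠ 0 := fun i h => by simpa [h] using hζ i
  have hindep : LinearIndependent ℂ (Sum.elim u v) := by
    refine linearIndependent_of_biorthogonal (fun k => ω (Sum.elim f' f'' k)) ?_ ?_
    · rintro (i | i) <;> simp [hu, hv', hf'f', hf'g'', hf''f'', hf''g', hζ0]
    · rintro (i | i) (j | j) hij
      · simp [hu, hf'f', hf'g'', Sum.inl_injective.ne_iff.mp hij]
      · simp [hv', hf'f'', hf'g']
      · simp [hu, hf''f', hf''g'']
      · simp [hv', hf''f'', hf''g', Sum.inr_injective.ne_iff.mp hij]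
  have hgen : ∀ k l, ω (Sum.elim u v k) (Sum.elim u v l) = 0 := by
    rintro (i | i) (j | j) <;> simp only [Sum.elim_inl, Sum.elim_inr, hu, hv']
    · exact apply_smul_add_eq_zero_of_norm_eq_one ω _ hf'f' hg''g'' hf'g'' hg''f' hζ i j
    · simp [hf'f'', hf'g', hg''f'', hg''g']
    · simp [hf''f', hf''g'', hg'f', hg'g'']
    · exact apply_smul_add_eq_zero_of_norm_eq_one ω _ hf''f'' hg'g' hf''g' hg'f'' hζ i j
  refine ⟨hindep, ω.apply_eq_zero_of_mem_span ?_, ?_⟩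
  · rintro _ ⟨k, rfl⟩ _ ⟨l, rfl⟩
    exact hgen k l
  · rw [finrank_span_eq_card hindep, Fintype.card_sum, Fintype.card_fin, two_mul]

/-- The subspace of matching solutions supported on the linking rays: the
vectors `u i = ζ i • f' i + g'' i` and `v i = g' i + ζ i • f'' i` are linearly
independent and span a `2p`-dimensional isotropic subspace. -/
theorem matching_subspace_isotropic
    {V : Type*} [AddCommGroup V] [Module ℂ V]
    (ω : V →ₗ⋆[ℂ] V →ₗ[ℂ] ℂ)
    (hskew : ∀ x y : V, (starRingEnd ℂ) (ω x y) = - ω y x)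
    (p : ℕ) (hp : 1 ≤ p)
    (f' g' f'' g'' : Fin p → V)
    (hf'f' : ∀ i j, ω (f' i) (f' j) = 2 * Complex.I * (if i = j then 1 else 0))
    (hf''f'' : ∀ i j, ω (f'' i) (f'' j) = 2 * Complex.I * (if i = j then 1 else 0))
    (hg'g' : ∀ i j, ω (g' i) (g' j) = -(2 * Complex.I * (if i = j then 1 else 0)))
    (hg''g'' : ∀ i j, ω (g'' i) (g'' j) = -(2 * Complex.I * (if i = j then 1 else 0)))
    (hf'g' : ∀ i j, ω (f' i) (g' j) = 0) (hg'f' : ∀ i j, ω (g' i) (f' j) = 0)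
    (hf''g'' : ∀ i j, ω (f'' i) (g'' j) = 0) (hg''f'' : ∀ i j, ω (g'' i) (f'' j) = 0)
    (hf'f'' : ∀ i j, ω (f' i) (f'' j) = 0) (hf''f' : ∀ i j, ω (f'' i) (f' j) = 0)
    (hf'g'' : ∀ i j, ω (f' i) (g'' j) = 0) (hg''f' : ∀ i j, ω (g'' i) (f' j) = 0)
    (hg'f'' : ∀ i j, ω (g' i) (f'' j) = 0) (hf''g' : ∀ i j, ω (f'' i) (g' j) = 0)
    (hg'g'' : ∀ i j, ω (g' i) (g'' j) = 0) (hg''g' : ∀ i j, ω (g'' i) (g' j) = 0)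
    (ζ : Fin p → ℂ) (hζ : ∀ i, ‖ζ i‖ = 1)
    (u v : Fin p → V)
    (hu : ∀ i, u i = ζ i • f' i + g'' i)
    (hv : ∀ i, v i = g' i + ζ i • f'' i) :
    LinearIndependent ℂ (Sum.elim u v) ∧
    (∀ x ∈ Submodule.span ℂ (Set.range (Sum.elim u v)),
      ∀ y ∈ Submodule.span ℂ (Set.range (Sum.elim u v)), ω x y = 0) ∧
    Module.finrank ℂ (Submodule.span ℂ (Set.range (Sum.elim u v))) = 2 * p :=
  matching_subspace_isotropic_general ω p f' g' f'' g'' hf'f' hf''f'' hg'g' hg''g'' hf'g' hg'f'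
    hf''g'' hg''f'' hf'f'' hf''f' hf'g'' hg''f' hg'f'' hf''g' hg'g'' hg''g' ζ hζ u v hu hv
end

section
/- Let V be a complex vector space and ω : V × V → ℂ a skew-Hermitian sesquilinear form. Let m = n + 2p with n, p ≥ 0, and let f_1,…,f_m, g_1,…,g_m ∈ V satisfy the Jost relations with parameter 1 (ω(f_i,f_j) = 2i·δ_{ij}, ω(g_i,g_j) = −2i·δ_{ij}, ω(f_i,g_j) = 0 = ω(g_i,f_j)). Let τ be a 2p×2p unitary matrix and let T be the m×m block-diagonal unitary matrix diag(τ, I_n). Let S be an m×m unitary matrix. Define z_i = (1/2)( Σ_j S_{ij} f_j + g_i ) for i = 1,…,m and w_i = (1/2)( Σ_j T_{ij} f_j + g_i ) for i = 1,…,m, and set L = span{z_1,…,z_m} and N = span{w_1,…,w_{2p}}. Let B = (i/2)( S·T* − I_m ) (where T* is the conjugate transpose of T) and let B_{(2p)} be the upper-left 2p×2p block of B. Then B_{(2p)} is invertible if and only if L ∩ N = {0}. -/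
open Complex

/-- Condition for the factorisation formula: the block `B_{(2p)}` of
`B = (i/2)(S T* - I)` is invertible iff the Lagrange plane `L` of scattering
waves meets the matching subspace `N` trivially. -/
theorem block_invertible_iff_trivial_intersection
    {V : Type*} [AddCommGroup V] [Module ℂ V]
    (ω : V →ₗ⋆[ℂ] V →ₗ[ℂ] ℂ)
    (hskew : ∀ x y : V, (starRingEnd ℂ) (ω x y) = - ω y x)
    (n p : ℕ)
    (f g : (Fin (2 * p) ⊕ Fin n) → V)
    (hff : ∀ i j, ω (f i) (f j) = 2 * Complex.I * (if i = j then 1 else 0))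
    (hgg : ∀ i j, ω (g i) (g j) = -(2 * Complex.I * (if i = j then 1 else 0)))
    (hfg : ∀ i j, ω (f i) (g j) = 0)
    (hgf : ∀ i j, ω (g i) (f j) = 0)
    (τ : Matrix (Fin (2 * p)) (Fin (2 * p)) ℂ)
    (hτ : τ ∈ Matrix.unitaryGroup (Fin (2 * p)) ℂ)
    (T : Matrix (Fin (2 * p) ⊕ Fin n) (Fin (2 * p) ⊕ Fin n) ℂ)
    (hT : T = Matrix.fromBlocks τ 0 0 (1 : Matrix (Fin n) (Fin n) ℂ))
    (S : Matrix (Fin (2 * p) ⊕ Fin n) (Fin (2 * p) ⊕ Fin n) ℂ)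
    (hS : S ∈ Matrix.unitaryGroup (Fin (2 * p) ⊕ Fin n) ℂ)
    (z w : (Fin (2 * p) ⊕ Fin n) → V)
    (hz : ∀ i, z i = ((1 : ℂ)/2) • ((∑ j, S i j • f j) + g i))
    (hw : ∀ i, w i = ((1 : ℂ)/2) • ((∑ j, T i j • f j) + g i))
    (L N : Submodule ℂ V)
    (hL : L = Submodule.span ℂ (Set.range z))
    (hN : N = Submodule.span ℂ (Set.range (fun i : Fin (2 * p) => w (Sum.inl i))))
    (B : Matrix (Fin (2 * p) ⊕ Fin n) (Fin (2 * p) ⊕ Fin n) ℂ)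
    (hB : B = (Complex.I / 2) • (S * T.conjTranspose - 1)) :
    IsUnit B.toBlocks₁₁ ↔ L ⊓ N = ⊥ := by
  have expand2 : ∀ (x : V) (M : Matrix (Fin (2*p) ⊕ Fin n) (Fin (2*p) ⊕ Fin n) ℂ) (i),
      ω x (((1:ℂ)/2) • ((∑ j, M i j • f j) + g i))
        = (1/2) * ((∑ j, M i j * ω x (f j)) + ω x (g i)) := by
    intro x M i
    simp only [map_add, map_smul, map_sum, smul_eq_mul]
  have hωfw : ∀ k i, ω (f k) (w i) = Complex.I * T i k := by
    intro k i
    rw [hw, expand2]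
    simp only [hff, hfg, mul_ite, mul_one, mul_zero, Finset.sum_ite_eq', Finset.sum_ite_eq, Finset.mem_univ, if_true,
      add_zero]
    ring
  have hωgw : ∀ k i, ω (g k) (w i) = -(Complex.I * (if k = i then 1 else 0)) := by
    intro k i
    rw [hw, expand2]
    simp only [hgf, hgg, mul_zero, Finset.sum_const_zero, zero_add]
    split <;> ring
  have hωfz : ∀ k i, ω (f k) (z i) = Complex.I * S i k := by
    intro k i
    rw [hz, expand2]
    simp only [hff, hfg, mul_ite, mul_one, mul_zero, Finset.sum_ite_eq', Finset.sum_ite_eq, Finset.mem_univ, if_true,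
      add_zero]
    ring
  have hωgz : ∀ k i, ω (g k) (z i) = -(Complex.I * (if k = i then 1 else 0)) := by
    intro k i
    rw [hz, expand2]
    simp only [hgf, hgg, mul_zero, Finset.sum_const_zero, zero_add]
    split <;> ring
  have hSS : S * S.conjTranspose = 1 := by
    rw [← Matrix.star_eq_conjTranspose]; exact Matrix.mem_unitaryGroup_iff.mp hS
  have expand1 : ∀ (M : Matrix (Fin (2*p) ⊕ Fin n) (Fin (2*p) ⊕ Fin n) ℂ) (j) (y : V),
      ω (((1:ℂ)/2) • ((∑ k, M j k • f k) + g j)) y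
        = (1/2) * ((∑ k, (starRingEnd ℂ) (M j k) * ω (f k) y) + ω (g j) y) := by
    intro M j y
    simp only [map_smulₛₗ, map_add, map_sum, LinearMap.add_apply, LinearMap.sum_apply,
      LinearMap.smul_apply, smul_eq_mul, map_div₀, map_one, map_ofNat]
  have hωzw : ∀ j i, ω (z j) (w i)
      = (Complex.I/2) * ((∑ k, (starRingEnd ℂ) (S j k) * T i k) - if j = i then 1 else 0) := by
    intro j i
    rw [hz, expand1]
    simp only [hωfw, hωgw]
    have : ∑ k, (starRingEnd ℂ) (S j k) * (Complex.I * T i k)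
        = Complex.I * ∑ k, (starRingEnd ℂ) (S j k) * T i k := by
      rw [Finset.mul_sum]; exact Finset.sum_congr rfl fun k _ => by ring
    rw [this]; ring
  have hωzz : ∀ j i, ω (z j) (z i) = 0 := by
    intro j i
    rw [hz, expand1]
    simp only [hωfz, hωgz]
    have h1 : ∑ k, S i k * (starRingEnd ℂ) (S j k) = if i = j then 1 else 0 := by
      have h2 := congrArg (fun M => M i j) hSS
      simpa [Matrix.mul_apply, Matrix.conjTranspose_apply, Matrix.one_apply] using h2
    have : ∑ k, (starRingEnd ℂ) (S j k) * (Complex.I * S i k)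
        = Complex.I * (if i = j then 1 else 0) := by
      rw [← h1, Finset.mul_sum]; exact Finset.sum_congr rfl fun k _ => by ring
    rw [this]
    rcases eq_or_ne i j with h | h
    · subst h; simp
    · simp [h, Ne.symm h]
  have hτ1 : τ * τ.conjTranspose = 1 := by
    rw [← Matrix.star_eq_conjTranspose]; exact Matrix.mem_unitaryGroup_iff.mp hτ
  have hτ2 : τ.conjTranspose * τ = 1 := by
    rw [← Matrix.star_eq_conjTranspose]; exact Matrix.mem_unitaryGroup_iff'.mp hτ
  have hT1 : T * T.conjTranspose = 1 := by
    rw [hT, Matrix.fromBlocks_conjTranspose, Matrix.fromBlocks_multiply]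
    simp [hτ1, Matrix.fromBlocks_one]
  have hT2 : T.conjTranspose * T = 1 := by
    rw [hT, Matrix.fromBlocks_conjTranspose, Matrix.fromBlocks_multiply]
    simp [hτ2, Matrix.fromBlocks_one]
  have hBentry : ∀ i j, B i j
      = (Complex.I/2) * ((∑ k, S i k * (starRingEnd ℂ) (T j k)) - if i = j then 1 else 0) := by
    intro i j
    rw [hB]
    simp [Matrix.smul_apply, Matrix.sub_apply, Matrix.mul_apply, Matrix.conjTranspose_apply,
      Matrix.one_apply, smul_eq_mul]
  have hzwB : ∀ j i, ω (z j) (w i) = -(starRingEnd ℂ) (B j i) := by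
    intro j i
    rw [hωzw, hBentry]
    simp only [map_mul, map_sub, map_sum, map_div₀, Complex.conj_I, apply_ite,
      map_one, map_zero, Complex.conj_conj, map_ofNat]
    split_ifs <;> ring
  constructor
  · intro hUnit
    rw [eq_bot_iff]
    rintro v ⟨hvL, hvN⟩
    rw [hN] at hvN
    obtain ⟨d, hd⟩ := (Submodule.mem_span_range_iff_exists_fun ℂ).mp hvN
    have hzv : ∀ jj, ω (z jj) v = 0 := by
      intro jj
      have hsub : L ≤ LinearMap.ker (ω (z jj)) := by
        rw [hL, Submodule.span_le]
        rintro _ ⟨i, rfl⟩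
        simpa [LinearMap.mem_ker] using hωzz jj i
      simpa [LinearMap.mem_ker] using hsub hvL
    have hkey : Matrix.mulVec B.toBlocks₁₁ (fun a => (starRingEnd ℂ) (d a)) = 0 := by
      funext b
      have h0 := hzv (Sum.inl b)
      rw [← hd, map_sum] at h0
      simp only [map_smul, smul_eq_mul, hzwB] at h0
      have h1 := congrArg (starRingEnd ℂ) h0
      rw [map_sum, map_zero] at h1
      simp only [map_mul, map_neg, Complex.conj_conj] at h1
      have h2 : ∑ a, (starRingEnd ℂ) (d a) * -(B (Sum.inl b) (Sum.inl a))
          = -∑ a, B (Sum.inl b) (Sum.inl a) * (starRingEnd ℂ) (d a) := by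
        rw [← Finset.sum_neg_distrib]; exact Finset.sum_congr rfl fun a _ => by ring
      rw [h2] at h1
      have h3 := neg_eq_zero.mp h1
      simpa [Matrix.mulVec, dotProduct, Matrix.toBlocks₁₁] using h3
    have hdz : ∀ a, d a = 0 := by
      intro a
      have hinv : B.toBlocks₁₁⁻¹ * B.toBlocks₁₁ = 1 :=
        Matrix.nonsing_inv_mul _ ((Matrix.isUnit_iff_isUnit_det _).mp hUnit)
      have he : (fun a => (starRingEnd ℂ) (d a)) = 0 := by
        calc (fun a => (starRingEnd ℂ) (d a))
            = Matrix.mulVec 1 (fun a => (starRingEnd ℂ) (d a)) := (Matrix.one_mulVec _).symm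
          _ = Matrix.mulVec B.toBlocks₁₁⁻¹ (Matrix.mulVec B.toBlocks₁₁ (fun a => (starRingEnd ℂ) (d a))) := by
              rw [Matrix.mulVec_mulVec, hinv]
          _ = (0 : _) := by rw [hkey, Matrix.mulVec_zero]
      have := congrFun he a
      simpa using this
    have : v = 0 := by rw [← hd]; simp [hdz]
    simp [this]
  · intro hLN
    by_contra hUnit
    have hBU : ∀ i j, B i j = (Complex.I/2) * ((S * T.conjTranspose) i j
        - if i = j then 1 else 0) := by
      intro i j
      rw [hB]
      simp [Matrix.smul_apply, Matrix.sub_apply, Matrix.one_apply, smul_eq_mul]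
    have hdetT : (Matrix.transpose B.toBlocks₁₁).det = 0 := by
      rw [Matrix.det_transpose]
      by_contra h
      exact hUnit ((Matrix.isUnit_iff_isUnit_det _).mpr (isUnit_iff_ne_zero.mpr h))
    obtain ⟨d, hd0, hdker⟩ := Matrix.exists_mulVec_eq_zero_iff.mpr hdetT
    set c : (Fin (2*p) ⊕ Fin n) → ℂ := Sum.elim d 0 with hc
    have hI2 : (Complex.I/2 : ℂ) ≠ 0 := by
      simp [Complex.I_ne_zero]
    -- step 1 : the kernel equation entrywise
    have hstep : ∀ b, ∑ a, (S * T.conjTranspose) (Sum.inl a) (Sum.inl b) * d a = d b := by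
      intro b
      have h0 := congrFun hdker b
      simp only [Matrix.mulVec, dotProduct, Matrix.transpose_apply, Matrix.toBlocks₁₁,
        Matrix.of_apply, Pi.zero_apply] at h0
      have h1 : ∀ a, B (Sum.inl a) (Sum.inl b) * d a
          = Complex.I/2 * ((S * T.conjTranspose) (Sum.inl a) (Sum.inl b) * d a)
            - Complex.I/2 * (if a = b then d a else 0) := by
        intro a
        rw [hBU]
        by_cases h : a = b
        · subst h; simp; ring
        · simp [h]; ring
      rw [Finset.sum_congr rfl fun a _ => h1 a, Finset.sum_sub_distrib, ← Finset.mul_sum,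
        ← Finset.mul_sum, Finset.sum_ite_eq' Finset.univ b d] at h0
      simp only [Finset.mem_univ, if_true] at h0
      have h2 := sub_eq_zero.mp h0
      exact mul_left_cancel₀ hI2 h2
    -- step 2 : unitarity of (S Tᴴ)ᵀ
    have hUU : (S * T.conjTranspose) * (S * T.conjTranspose).conjTranspose = 1 := by
      rw [Matrix.conjTranspose_mul, Matrix.conjTranspose_conjTranspose]
      calc S * T.conjTranspose * (T * S.conjTranspose)
          = S * ((T.conjTranspose * T) * S.conjTranspose) := by
            rw [mul_assoc, mul_assoc]
        _ = 1 := by rw [hT2, one_mul, hSS]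
    have hMM : ((Matrix.transpose (S * T.conjTranspose))).conjTranspose * (Matrix.transpose (S * T.conjTranspose)) = 1 := by
      have e1 : (Matrix.transpose (S * T.conjTranspose)).conjTranspose
          = Matrix.transpose ((S * T.conjTranspose).conjTranspose) := rfl
      rw [e1, ← Matrix.transpose_mul, hUU, Matrix.transpose_one]
    -- step 3 : the image vector
    set x : (Fin (2*p) ⊕ Fin n) → ℂ := Matrix.mulVec (Matrix.transpose (S * T.conjTranspose)) c with hx
    have hxl : ∀ b, x (Sum.inl b) = d b := by
      intro b
      rw [hx]
      simp only [Matrix.mulVec, dotProduct, Matrix.transpose_apply]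
      rw [Fintype.sum_sum_type]
      simp only [hc, Sum.elim_inl, Sum.elim_inr, Pi.zero_apply, mul_zero, Finset.sum_const_zero, add_zero]
      exact hstep b
    -- step 4 : norm preservation
    have hdot : dotProduct (star x) x = dotProduct (star c) c := by
      rw [hx, Matrix.star_mulVec, Matrix.dotProduct_mulVec, Matrix.vecMul_vecMul, hMM,
        Matrix.vecMul_one]
    have hreal : ∑ i, Complex.normSq (x i) = ∑ i, Complex.normSq (c i) := by
      have h1 : (↑(∑ i, Complex.normSq (x i)) : ℂ) = ↑(∑ i, Complex.normSq (c i)) := by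
        push_cast
        calc (∑ i, (Complex.normSq (x i) : ℂ))
            = dotProduct (star x) x := by
              simp [dotProduct, Complex.normSq_eq_conj_mul_self]
          _ = dotProduct (star c) c := hdot
          _ = ∑ i, (Complex.normSq (c i) : ℂ) := by
              simp [dotProduct, Complex.normSq_eq_conj_mul_self]
      exact_mod_cast h1
    have hxr : ∀ m, x (Sum.inr m) = 0 := by
      have h2 : ∑ m, Complex.normSq (x (Sum.inr m)) = 0 := by
        have := hreal
        rw [Fintype.sum_sum_type, Fintype.sum_sum_type] at this
        simp only [hc, Sum.elim_inl, Sum.elim_inr, Pi.zero_apply, Complex.normSq_zero,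
          Finset.sum_const_zero, add_zero] at this
        simp only [hxl] at this
        linarith
      intro m
      have h3 := (Finset.sum_eq_zero_iff_of_nonneg
        (fun i _ => Complex.normSq_nonneg (x (Sum.inr i)))).mp h2 m (Finset.mem_univ m)
      exact Complex.normSq_eq_zero.mp h3
    have hxc : x = c := by
      funext i
      cases i with
      | inl b => rw [hxl b]; simp [hc]
      | inr m => rw [hxr m]; simp [hc]
    -- step 5 : c ᵥ* S = c ᵥ* T
    have hvm : Matrix.vecMul c (S * T.conjTranspose) = c := by
      rw [← Matrix.mulVec_transpose, ← hx, hxc]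
    have hST : Matrix.vecMul c S = Matrix.vecMul c T := by
      have h4 := congrArg (fun v => Matrix.vecMul v T) hvm
      simp only [Matrix.vecMul_vecMul] at h4
      rw [mul_assoc, hT2, mul_one] at h4
      exact h4
    have hSTj : ∀ k, ∑ a, d a * S (Sum.inl a) k = ∑ a, d a * T (Sum.inl a) k := by
      intro k
      have h5 := congrFun hST k
      simp only [Matrix.vecMul, dotProduct] at h5
      rw [Fintype.sum_sum_type, Fintype.sum_sum_type] at h5
      simpa [hc] using h5
    -- the witness vector
    set v : V := ∑ a, d a • w (Sum.inl a) with hv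
    have hvN : v ∈ N := by
      rw [hN]
      exact (Submodule.mem_span_range_iff_exists_fun ℂ).mpr ⟨d, rfl⟩
    have hdiff : ∀ i, z i - w i = ((1:ℂ)/2) • ∑ j, (S i j - T i j) • f j := by
      intro i
      rw [hz, hw, ← smul_sub]
      congr 1
      rw [add_sub_add_right_eq_sub, ← Finset.sum_sub_distrib]
      exact Finset.sum_congr rfl fun j _ => (sub_smul _ _ _).symm
    have hzero : ∑ a, d a • (z (Sum.inl a) - w (Sum.inl a)) = 0 := by
      have h6 : ∀ a, d a • (z (Sum.inl a) - w (Sum.inl a))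
          = ∑ j, (d a * ((1/2) * (S (Sum.inl a) j - T (Sum.inl a) j))) • f j := by
        intro a
        rw [hdiff, smul_smul, Finset.smul_sum]
        exact Finset.sum_congr rfl fun j _ => by rw [smul_smul]; ring_nf
      rw [Finset.sum_congr rfl fun a _ => h6 a, Finset.sum_comm]
      refine Finset.sum_eq_zero fun j _ => ?_
      rw [← Finset.sum_smul]
      convert zero_smul ℂ (f j) using 2
      have h7 : ∑ a, d a * ((1/2) * (S (Sum.inl a) j - T (Sum.inl a) j))
          = (1/2) * ((∑ a, d a * S (Sum.inl a) j) - ∑ a, d a * T (Sum.inl a) j) := by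
        rw [← Finset.sum_sub_distrib, Finset.mul_sum]
        exact Finset.sum_congr rfl fun a _ => by ring
      rw [h7, hSTj, sub_self, mul_zero]
    have hvL : v ∈ L := by
      rw [hL]
      refine (Submodule.mem_span_range_iff_exists_fun ℂ).mpr ⟨c, ?_⟩
      have hsum1 : ∑ i, c i • z i = ∑ a, d a • z (Sum.inl a) := by
        rw [Fintype.sum_sum_type]
        simp [hc]
      rw [hsum1, hv]
      have h8 : ∑ a, d a • z (Sum.inl a) - ∑ a, d a • w (Sum.inl a) = 0 := by
        rw [← Finset.sum_sub_distrib]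
        rw [← hzero]
        exact Finset.sum_congr rfl fun a _ => (smul_sub _ _ _).symm
      exact sub_eq_zero.mp h8
    have hvne : v ≠ 0 := by
      intro hv0
      have hcT : ∀ k, ∑ a, d a * T (Sum.inl a) k = 0 := by
        intro k
        have h0 : ω (f k) v = 0 := by rw [hv0, map_zero]
        rw [hv, map_sum] at h0
        simp only [map_smul, smul_eq_mul, hωfw] at h0
        have h1 : ∑ a, d a * (Complex.I * T (Sum.inl a) k)
            = Complex.I * ∑ a, d a * T (Sum.inl a) k := by
          rw [Finset.mul_sum]; exact Finset.sum_congr rfl fun a _ => by ring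
        rw [h1] at h0
        rcases mul_eq_zero.mp h0 with h | h
        · exact absurd h Complex.I_ne_zero
        · exact h
      have hvT : Matrix.vecMul c T = 0 := by
        funext k
        simp only [Matrix.vecMul, dotProduct]
        rw [Fintype.sum_sum_type]
        simp only [hc, Sum.elim_inl, Sum.elim_inr, Pi.zero_apply, zero_mul,
          Finset.sum_const_zero, add_zero]
        exact hcT k
      have hc0 : c = 0 := by
        have h2 := congrArg (fun u => Matrix.vecMul u T.conjTranspose) hvT
        simp only [Matrix.vecMul_vecMul, hT1, Matrix.vecMul_one, Matrix.zero_vecMul] at h2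
        exact h2
      obtain ⟨a, ha⟩ := Function.ne_iff.mp hd0
      exact ha (by simpa [hc] using congrFun hc0 (Sum.inl a))
    have hmem : v ∈ L ⊓ N := ⟨hvL, hvN⟩
    rw [hLN] at hmem
    exact hvne ((Submodule.mem_bot ℂ).mp hmem)
end

section
/- Let p, n', n'' be natural numbers. Let S' be a (p+n')×(p+n') unitary complex matrix written in block form S' = [[S'_{(p)}, S'_{(p,n')}], [S'_{(n',p)}, S'_{(n')}]] and let S'' be a (p+n'')×(p+n'') unitary complex matrix written in block form S'' = [[S''_{(p)}, S''_{(p,n'')}], [S''_{(n'',p)}, S''_{(n'')}]]. Let ζ be a p×p diagonal matrix whose diagonal entries all have modulus 1, and suppose the 2p×2p matrix M = [[ζ, −S'_{(p)}], [−S''_{(p)}, ζ]] is invertible. Then the (n''+n')×(n''+n') matrix S = [[S''_{(n'')}, 0], [0, S'_{(n')}]] + [[S''_{(n'',p)}, 0], [0, S'_{(n',p)}]] · M⁻¹ · [[0, S'_{(p,n')}], [S''_{(p,n'')}, 0]] is unitary. -/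
open Complex Matrix

lemma unitary_blocks' {m n : Type*} [Fintype m] [Fintype n] [DecidableEq m] [DecidableEq n]
    (X : Matrix (m ⊕ n) (m ⊕ n) ℂ) (h : X ∈ Matrix.unitaryGroup (m ⊕ n) ℂ) :
    X.toBlocks₁₁ * X.toBlocks₁₁ᴴ + X.toBlocks₁₂ * X.toBlocks₁₂ᴴ = 1 ∧
    X.toBlocks₁₁ * X.toBlocks₂₁ᴴ + X.toBlocks₁₂ * X.toBlocks₂₂ᴴ = 0 ∧
    X.toBlocks₂₁ * X.toBlocks₁₁ᴴ + X.toBlocks₂₂ * X.toBlocks₁₂ᴴ = 0 ∧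
    X.toBlocks₂₁ * X.toBlocks₂₁ᴴ + X.toBlocks₂₂ * X.toBlocks₂₂ᴴ = 1 := by
  have h1 : X * Xᴴ = 1 := by
    have := (Matrix.mem_unitaryGroup_iff).mp h
    rwa [Matrix.star_eq_conjTranspose] at this
  rw [← Matrix.fromBlocks_toBlocks X, Matrix.fromBlocks_conjTranspose,
    Matrix.fromBlocks_multiply, ← Matrix.fromBlocks_one] at h1
  have h2 := Matrix.fromBlocks_inj.mp h1
  simpa using h2

lemma zeta_unitary' {p : ℕ} (ζ : Matrix (Fin p) (Fin p) ℂ)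
    (hζdiag : ∀ i j, i ≠ j → ζ i j = 0)
    (hζmod : ∀ i, ‖ζ i i‖ = 1) : ζ * ζᴴ = 1 := by
  have hd : ζ = Matrix.diagonal (fun i => ζ i i) := by
    ext i j
    by_cases h : i = j
    · subst h; simp
    · simp [Matrix.diagonal_apply_ne _ h, hζdiag i j h]
  rw [hd, Matrix.diagonal_conjTranspose, Matrix.diagonal_mul_diagonal]
  ext i j
  by_cases h : i = j
  · subst h
    have h1 : Complex.normSq (ζ i i) = 1 := by
      rw [Complex.normSq_eq_norm_sq, hζmod i, one_pow]
    simp [Complex.mul_conj, h1]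
  · simp [Matrix.diagonal_apply_ne _ h, Matrix.one_apply_ne h]

/-- Unitarity of the composed (factorised) scattering matrix of a graph formed
by linking `p` rays of a graph with scattering matrix `S'` to `p` rays of a
graph with scattering matrix `S''` through edges encoded by the unimodular
diagonal matrix `ζ`. -/
theorem composed_scattering_matrix_unitary
    (p n' n'' : ℕ)
    (S' : Matrix (Fin p ⊕ Fin n') (Fin p ⊕ Fin n') ℂ)
    (hS' : S' ∈ Matrix.unitaryGroup (Fin p ⊕ Fin n') ℂ)
    (S'' : Matrix (Fin p ⊕ Fin n'') (Fin p ⊕ Fin n'') ℂ)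
    (hS'' : S'' ∈ Matrix.unitaryGroup (Fin p ⊕ Fin n'') ℂ)
    (ζ : Matrix (Fin p) (Fin p) ℂ)
    (hζdiag : ∀ i j, i ≠ j → ζ i j = 0)
    (hζmod : ∀ i, ‖ζ i i‖ = 1)
    (M : Matrix (Fin p ⊕ Fin p) (Fin p ⊕ Fin p) ℂ)
    (hM : M = Matrix.fromBlocks ζ (-(S'.toBlocks₁₁)) (-(S''.toBlocks₁₁)) ζ)
    (hMinv : IsUnit M)
    (S : Matrix (Fin n'' ⊕ Fin n') (Fin n'' ⊕ Fin n') ℂ)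
    (hS : S = Matrix.fromBlocks S''.toBlocks₂₂ 0 0 S'.toBlocks₂₂ +
        (Matrix.fromBlocks S''.toBlocks₂₁ 0 0 S'.toBlocks₂₁) * M⁻¹ *
          (Matrix.fromBlocks 0 S'.toBlocks₁₂ S''.toBlocks₁₂ 0)) :
    S ∈ Matrix.unitaryGroup (Fin n'' ⊕ Fin n') ℂ := by
  obtain ⟨h1', h2', h3', h4'⟩ := unitary_blocks' S' hS'
  obtain ⟨h1'', h2'', h3'', h4''⟩ := unitary_blocks' S'' hS''
  -- abbreviations
  set A' := S'.toBlocks₁₁ with hA'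
  set B' := S'.toBlocks₁₂ with hB'
  set C' := S'.toBlocks₂₁ with hC'
  set D' := S'.toBlocks₂₂ with hD'
  set A'' := S''.toBlocks₁₁ with hA''
  set B'' := S''.toBlocks₁₂ with hB''
  set C'' := S''.toBlocks₂₁ with hC''
  set D'' := S''.toBlocks₂₂ with hD''
  set Dm := Matrix.fromBlocks D'' 0 0 D' with hDm
  set Cm := Matrix.fromBlocks C'' 0 0 C' with hCm
  set Bm := Matrix.fromBlocks (0 : Matrix (Fin p) (Fin n'') ℂ) B' B'' 0 with hBm
  set Z := Matrix.fromBlocks ζ (0 : Matrix (Fin p) (Fin p) ℂ) 0 ζ with hZ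
  set N := M⁻¹ with hN
  -- kinematic facts
  have hζu : ζ * ζᴴ = 1 := zeta_unitary' ζ hζdiag hζmod
  have hZZ : Z * Zᴴ = 1 := by
    rw [hZ, Matrix.fromBlocks_conjTranspose, Matrix.fromBlocks_multiply]
    simp [hζu, Matrix.fromBlocks_one]
  have hdet : IsUnit M.det := M.isUnit_iff_isUnit_det.mp hMinv
  have hNM : N * M = 1 := Matrix.nonsing_inv_mul M hdet
  have hMN : Mᴴ * Nᴴ = 1 := by
    have := congrArg Matrix.conjTranspose hNM
    simpa [Matrix.conjTranspose_mul] using this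
  -- block identities
  have hDD : Dm * Dmᴴ = 1 - Cm * Cmᴴ := by
    rw [eq_sub_iff_add_eq, hDm, hCm, Matrix.fromBlocks_conjTranspose,
      Matrix.fromBlocks_conjTranspose, Matrix.fromBlocks_multiply,
      Matrix.fromBlocks_multiply, Matrix.fromBlocks_add, ← Matrix.fromBlocks_one]
    refine Matrix.fromBlocks_inj.mpr ⟨?_, ?_, ?_, ?_⟩
    · simpa [add_comm] using h4''
    · simp
    · simp
    · simpa [add_comm] using h4'
  have hMZ : M - Z = Matrix.fromBlocks 0 (-A') (-A'') 0 := by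
    rw [hM, hZ, sub_eq_iff_eq_add, Matrix.fromBlocks_add]
    simp
  have hZM : Z - M = Matrix.fromBlocks 0 A' A'' 0 := by
    have : Z - M = -(M - Z) := by abel
    rw [this, hMZ, Matrix.fromBlocks_neg]
    simp
  have hBD : Bm * Dmᴴ = (M - Z) * Cmᴴ := by
    rw [hMZ, hBm, hDm, hCm, Matrix.fromBlocks_conjTranspose,
      Matrix.fromBlocks_conjTranspose, Matrix.fromBlocks_multiply,
      Matrix.fromBlocks_multiply]
    refine Matrix.fromBlocks_inj.mpr ⟨?_, ?_, ?_, ?_⟩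
    · simp
    · simp [eq_neg_of_add_eq_zero_right h2']
    · simp [eq_neg_of_add_eq_zero_right h2'']
    · simp
  have hDB : Dm * Bmᴴ = Cm * (Mᴴ - Zᴴ) := by
    have := congrArg Matrix.conjTranspose hBD
    simpa [Matrix.conjTranspose_mul, Matrix.conjTranspose_sub] using this
  have hBB1 : Bm * Bmᴴ = 1 - (Z - M) * (Z - M)ᴴ := by
    rw [eq_sub_iff_add_eq, hZM, hBm, Matrix.fromBlocks_conjTranspose,
      Matrix.fromBlocks_conjTranspose, Matrix.fromBlocks_multiply,
      Matrix.fromBlocks_multiply, Matrix.fromBlocks_add, ← Matrix.fromBlocks_one]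
    refine Matrix.fromBlocks_inj.mpr ⟨?_, ?_, ?_, ?_⟩
    · simpa [add_comm] using h1'
    · simp
    · simp
    · simpa [add_comm] using h1''
  have hBB : Bm * Bmᴴ = Z * Mᴴ + M * Zᴴ - M * Mᴴ := by
    rw [hBB1, Matrix.conjTranspose_sub, Matrix.sub_mul, Matrix.mul_sub, Matrix.mul_sub,
      hZZ]
    abel
  -- assoc helpers
  have hNM' : ∀ X : Matrix (Fin p ⊕ Fin p) (Fin n'' ⊕ Fin n') ℂ, N * (M * X) = X := by
    intro X; rw [← Matrix.mul_assoc, hNM, Matrix.one_mul]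
  have hMN' : ∀ X : Matrix (Fin p ⊕ Fin p) (Fin n'' ⊕ Fin n') ℂ, Mᴴ * (Nᴴ * X) = X := by
    intro X; rw [← Matrix.mul_assoc, hMN, Matrix.one_mul]
  have hDB' : ∀ X : Matrix (Fin p ⊕ Fin p) (Fin n'' ⊕ Fin n') ℂ,
      Dm * (Bmᴴ * X) = Cm * (Mᴴ * X) - Cm * (Zᴴ * X) := by
    intro X
    rw [← Matrix.mul_assoc, hDB, Matrix.mul_assoc, Matrix.sub_mul, Matrix.mul_sub]
  have hBB' : ∀ X : Matrix (Fin p ⊕ Fin p) (Fin n'' ⊕ Fin n') ℂ,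
      Bm * (Bmᴴ * X) = Z * (Mᴴ * X) + M * (Zᴴ * X) - M * (Mᴴ * X) := by
    intro X
    rw [← Matrix.mul_assoc, hBB, Matrix.sub_mul, Matrix.add_mul,
      Matrix.mul_assoc, Matrix.mul_assoc, Matrix.mul_assoc]
  -- final computation
  rw [Matrix.mem_unitaryGroup_iff, Matrix.star_eq_conjTranspose, hS]
  simp only [Matrix.conjTranspose_add, Matrix.conjTranspose_mul, Matrix.add_mul,
    Matrix.mul_add, Matrix.mul_assoc]
  rw [hDD]
  rw [hBD]
  rw [hDB', hBB', hMN']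
  simp only [Matrix.mul_add, Matrix.mul_sub, Matrix.sub_mul, Matrix.add_mul, hNM', hMN',
    Matrix.mul_assoc]
  abel
end
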